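/- arXiv:2012.05083 — 3 statements merged into one kernel-verified Lean document; each statement's English description precedes it below -/
import Mathlib

section
/- Let W = (W_t)_{t≥0} be a standard one-dimensional Brownian motion and T an exponentially distributed random variable with parameter λ > 0 independent of W. Let σ > 0, a ∈ ℝ, set β̃ := 2a/σ² − 1 and V_s := σ W_s + (a − σ²/2) s. Let β > 0 be such that (1/2)σ²β(β̃ − β) + λ > 0 and such that there exists p > 1 with β/p − β̃ > 0. Then E[ (∫₀^T e^{−V_s} ds)^β ] < ∞. -/
open MeasureTheory ProbabilityTheory

/-- A standard one-dimensional Brownian motion started at `0`: each `W t` is measurable,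
paths start at `0` and are continuous, increments over `[s,t]` (for `0 ≤ s ≤ t`) are centered
Gaussian with variance `t - s`, and increments over consecutive intervals are independent. -/
def IsStandardBM {Ω : Type*} [MeasurableSpace Ω] (P : Measure Ω) (W : ℝ → Ω → ℝ) : Prop :=
  (∀ t : ℝ, Measurable (W t)) ∧
  (∀ ω, W 0 ω = 0) ∧
  (∀ ω, Continuous fun t => W t ω) ∧
  (∀ s t : ℝ, 0 ≤ s → s ≤ t →
    Measure.map (fun ω => W t ω - W s ω) P = gaussianReal 0 (Real.toNNReal (t - s))) ∧
  ∀ (n : ℕ) (u : ℕ → ℝ), Monotone u → 0 ≤ u 0 →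
    iIndepFun
      (fun i : Fin n => fun ω => W (u (i + 1)) ω - W (u i) ω) P

/-!
For `β > 1`, Hölder's inequality with the weight `e^{-δs}` bounds `(∫₀^T e^{-V_s} ds)^β` by a
constant times `∫₀^T e^{βδs} e^{-βV_s} ds`. As `T` is independent of `W`, the expectation of the
latter is `∫₀^∞ P(T > s) e^{βδs} E[e^{-βV_s}] ds = ∫₀^∞ e^{-(λ - βδ - ρ)s} ds`, where
`ρ = ½σ²β(β - β̃) < λ` is the growth rate of `E[e^{-βV_s}]`; it is finite once `δ` is small.

For `β ≤ 1`, cut `[0, T)` into the unit blocks `[k, k + 1)` with `k < T`. Subadditivity of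
`x ↦ x^β` and the bound `y^β ≤ x^β + x^{β-1} y` with `x = e^{-V_k}` reduce the moment to
`∑ₖ P(T > k) (E[e^{-βV_k}] + ∫ₖ^{k+1} E[e^{-(β-1)V_k} e^{-V_s}] ds)`, and independence of
`W_k` and `W_s - W_k` makes the `k`-th term at most `C e^{(ρ - λ)k}`.
-/

open Real Set
open scoped ENNReal NNReal

lemma ENNReal.ofReal_exp_mul_ofReal_exp (x y : ℝ) :
    ENNReal.ofReal (exp x) * ENNReal.ofReal (exp y) = ENNReal.ofReal (exp (x + y)) := by
  rw [← ENNReal.ofReal_mul (exp_nonneg x), exp_add]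

lemma ENNReal.ofReal_exp_rpow (x β : ℝ) :
    ENNReal.ofReal (exp x) ^ β = ENNReal.ofReal (exp (β * x)) := by
  rw [ENNReal.ofReal_rpow_of_pos (exp_pos x), ← exp_mul, mul_comm]

lemma ENNReal.rpow_le_one_add {x : ℝ≥0∞} {β : ℝ} (hβ0 : 0 ≤ β) (hβ1 : β ≤ 1) :
    x ^ β ≤ 1 + x := by
  rcases le_total x 1 with hx | hx
  · exact (ENNReal.rpow_le_one hx hβ0).trans le_self_add
  · calc x ^ β ≤ x ^ (1 : ℝ) := ENNReal.rpow_le_rpow_of_exponent_le hx hβ1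
      _ = x := ENNReal.rpow_one x
      _ ≤ 1 + x := le_add_self

lemma ENNReal.rpow_le_rpow_add_rpow_sub_one_mul {x : ℝ≥0∞} (y : ℝ≥0∞) (hx0 : x ≠ 0)
    (hx : x ≠ ⊤) {β : ℝ} (hβ0 : 0 ≤ β) (hβ1 : β ≤ 1) :
    y ^ β ≤ x ^ β + x ^ (β - 1) * y := by
  calc y ^ β = x ^ β * (y / x) ^ β := by
        rw [← ENNReal.mul_rpow_of_nonneg _ _ hβ0, ENNReal.mul_div_cancel hx0 hx]
    _ ≤ x ^ β * (1 + y / x) := by gcongr; exact ENNReal.rpow_le_one_add hβ0 hβ1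
    _ = x ^ β + x ^ (β - 1) * y := by
        rw [mul_add, mul_one, ENNReal.rpow_sub _ _ hx0 hx, ENNReal.rpow_one, div_eq_mul_inv,
          div_eq_mul_inv]
        ring

lemma ENNReal.rpow_sum_le_sum_rpow {ι : Type*} (s : Finset ι) (x : ι → ℝ≥0∞) {β : ℝ}
    (hβ0 : 0 < β) (hβ1 : β ≤ 1) :
    (∑ i ∈ s, x i) ^ β ≤ ∑ i ∈ s, x i ^ β :=
  Finset.le_sum_of_subadditive (· ^ β) (ENNReal.zero_rpow_of_pos hβ0).le
    (fun a b => ENNReal.rpow_add_le_add_rpow a b hβ0.le hβ1) s x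

lemma ENNReal.lintegral_mul_rpow_le {α : Type*} [MeasurableSpace α] {μ : Measure α}
    {f g : α → ℝ≥0∞} (hf : AEMeasurable f μ) (hg : AEMeasurable g μ) {p q : ℝ}
    (hpq : p.HolderConjugate q) :
    (∫⁻ a, f a * g a ∂μ) ^ q ≤ (∫⁻ a, f a ^ p ∂μ) ^ (q - 1) * ∫⁻ a, g a ^ q ∂μ := by
  have hq : 0 < q := hpq.symm.pos
  calc (∫⁻ a, f a * g a ∂μ) ^ q
      ≤ ((∫⁻ a, f a ^ p ∂μ) ^ (1 / p) * (∫⁻ a, g a ^ q ∂μ) ^ (1 / q)) ^ q :=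
        ENNReal.rpow_le_rpow (ENNReal.lintegral_mul_le_Lp_mul_Lq μ hpq hf hg) hq.le
    _ = (∫⁻ a, f a ^ p ∂μ) ^ (q - 1) * ∫⁻ a, g a ^ q ∂μ := by
        rw [ENNReal.mul_rpow_of_nonneg _ _ hq.le, ← ENNReal.rpow_mul, ← ENNReal.rpow_mul,
          one_div_mul_eq_div, hpq.symm.div_conj_eq_sub_one, one_div_mul_cancel hq.ne',
          ENNReal.rpow_one]

lemma setLIntegral_Ico_natCast_eq_sum (f : ℝ → ℝ≥0∞) (n : ℕ) :
    ∫⁻ s in Ico (0 : ℝ) n, f s = ∑ k ∈ Finset.range n, ∫⁻ s in Ico (k : ℝ) (k + 1), f s := by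
  induction n with
  | zero => simp
  | succ n ih =>
    rw [Finset.sum_range_succ, ← ih, Nat.cast_succ,
      ← Ico_union_Ico_eq_Ico (Nat.cast_nonneg n) (le_add_of_nonneg_right zero_le_one),
      lintegral_union measurableSet_Ico Ico_disjoint_Ico_same]

lemma rpow_setLIntegral_Ioo_le_tsum (f : ℝ → ℝ≥0∞) (t : ℝ) {β : ℝ} (hβ0 : 0 < β) (hβ1 : β ≤ 1) :
    (∫⁻ s in Ioo 0 t, f s) ^ β
      ≤ ∑' k : ℕ, if (k : ℝ) < t then (∫⁻ s in Ico (k : ℝ) (k + 1), f s) ^ β else 0 := by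
  calc (∫⁻ s in Ioo 0 t, f s) ^ β
      ≤ (∫⁻ s in Ico (0 : ℝ) ⌈t⌉₊, f s) ^ β := by
        gcongr
        exact fun s hs => ⟨hs.1.le, hs.2.trans_le (Nat.le_ceil t)⟩
    _ ≤ ∑ k ∈ Finset.range ⌈t⌉₊, (∫⁻ s in Ico (k : ℝ) (k + 1), f s) ^ β := by
        rw [setLIntegral_Ico_natCast_eq_sum]
        exact ENNReal.rpow_sum_le_sum_rpow _ _ hβ0 hβ1
    _ = ∑ k ∈ Finset.range ⌈t⌉₊,
          if (k : ℝ) < t then (∫⁻ s in Ico (k : ℝ) (k + 1), f s) ^ β else 0 :=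
        Finset.sum_congr rfl fun k hk => (if_pos (Nat.lt_ceil.mp (Finset.mem_range.mp hk))).symm
    _ ≤ _ := ENNReal.sum_le_tsum _

lemma rpow_setLIntegral_Ioo_le_of_holderConjugate {f : ℝ → ℝ≥0∞} (hf : Measurable f) {p β : ℝ}
    (hpβ : p.HolderConjugate β) (δ t : ℝ) :
    (∫⁻ s in Ioo 0 t, f s) ^ β
      ≤ (∫⁻ s in Ioi 0, ENNReal.ofReal (exp (-(p * δ) * s))) ^ (β - 1)
        * ∫⁻ s in Ioo 0 t, ENNReal.ofReal (exp (β * δ * s)) * f s ^ β := by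
  have hsplit : ∀ s,
      f s = ENNReal.ofReal (exp (-δ * s)) * (ENNReal.ofReal (exp (δ * s)) * f s) := fun s => by
    rw [← mul_assoc, ENNReal.ofReal_exp_mul_ofReal_exp, neg_mul, neg_add_cancel, exp_zero,
      ENNReal.ofReal_one, one_mul]
  calc (∫⁻ s in Ioo 0 t, f s) ^ β
      = (∫⁻ s in Ioo 0 t,
          ENNReal.ofReal (exp (-δ * s)) * (ENNReal.ofReal (exp (δ * s)) * f s)) ^ β := by
        simp only [← hsplit]
    _ ≤ (∫⁻ s in Ioo 0 t, ENNReal.ofReal (exp (-δ * s)) ^ p) ^ (β - 1)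
          * ∫⁻ s in Ioo 0 t, (ENNReal.ofReal (exp (δ * s)) * f s) ^ β :=
        ENNReal.lintegral_mul_rpow_le (by fun_prop) (by fun_prop) hpβ
    _ ≤ _ := by
        gcongr ?_ ^ _ * ?_
        · exact hpβ.symm.sub_one_pos.le
        · refine (lintegral_mono fun s => ?_).trans (lintegral_mono_set Ioo_subset_Ioi_self)
          rw [ENNReal.ofReal_exp_rpow]
          exact le_of_eq (by ring_nf)
        · refine lintegral_mono fun s => ?_
          rw [ENNReal.mul_rpow_of_nonneg _ _ hpβ.symm.nonneg, ENNReal.ofReal_exp_rpow]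
          exact le_of_eq (by ring_nf)

lemma ofReal_intervalIntegral_rpow_eq {f : ℝ → ℝ} {t β : ℝ} (hf : IntervalIntegrable f volume 0 t)
    (hf0 : ∀ s, 0 ≤ f s) (ht : 0 ≤ t) (hβ : 0 ≤ β) :
    ENNReal.ofReal ((∫ s in 0..t, f s) ^ β) = (∫⁻ s in Ioo 0 t, ENNReal.ofReal (f s)) ^ β := by
  rw [← ENNReal.ofReal_rpow_of_nonneg (intervalIntegral.integral_nonneg ht fun s _ => hf0 s) hβ,
    intervalIntegral.integral_of_le ht, integral_Ioc_eq_integral_Ioo,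
    ofReal_integral_eq_lintegral_ofReal
      (((intervalIntegrable_iff_integrableOn_Ioc_of_le ht).mp hf).mono_set Ioo_subset_Ioc_self)
      (ae_of_all _ hf0)]

section Laws

variable {Ω : Type*} {mΩ : MeasurableSpace Ω} {P : Measure Ω}

lemma lintegral_exp_mul_of_map_eq_gaussianReal {X : Ω → ℝ} {v : ℝ≥0}
    (hX : P.map X = gaussianReal 0 v) (c : ℝ) :
    ∫⁻ ω, ENNReal.ofReal (exp (c * X ω)) ∂P = ENNReal.ofReal (exp (v * c ^ 2 / 2)) := by
  have hXm : AEMeasurable X P := aemeasurable_of_map_neZero (by rw [hX]; infer_instance)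
  have hint : Integrable (fun ω => exp (c * X ω)) P := by
    have h := integrable_exp_mul_gaussianReal (μ := 0) (v := v) c
    rw [← hX, integrable_map_measure (by fun_prop) hXm] at h
    exact h
  rw [← ofReal_integral_eq_lintegral_ofReal hint (ae_of_all _ fun _ => exp_nonneg _)]
  have h := mgf_gaussianReal hX c
  rw [mgf, zero_mul, zero_add] at h
  rw [h]

lemma expMeasure_Ioi {r x : ℝ} (hr : 0 < r) (hx : 0 ≤ x) :
    expMeasure r (Ioi x) = ENNReal.ofReal (exp (-(r * x))) := by
  have := isProbabilityMeasure_expMeasure hr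
  rw [← compl_Iic, prob_compl_eq_one_sub measurableSet_Iic, ← ofReal_cdf,
    cdf_expMeasure_eq hr, if_pos hx, ENNReal.ofReal_sub _ (exp_nonneg _), ENNReal.ofReal_one,
    ENNReal.sub_sub_cancel ENNReal.one_ne_top
      (ENNReal.ofReal_le_one.mpr (exp_le_one_iff.mpr (by nlinarith)))]

lemma expMeasure_Iio_zero {r : ℝ} (hr : 0 < r) : expMeasure r (Iio 0) = 0 := by
  have := isProbabilityMeasure_expMeasure hr
  refine measure_mono_null Iio_subset_Iic_self ?_
  rw [← ofReal_cdf, cdf_expMeasure_eq hr, if_pos le_rfl, mul_zero, neg_zero, exp_zero, sub_self,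
    ENNReal.ofReal_zero]

lemma measure_lt_of_map_eq_expMeasure {X : Ω → ℝ} (hX : Measurable X) {r : ℝ} (hr : 0 < r)
    (hlaw : P.map X = expMeasure r) {s : ℝ} (hs : 0 ≤ s) :
    P {ω | s < X ω} = ENNReal.ofReal (exp (-(r * s))) := by
  rw [← expMeasure_Ioi hr hs, ← hlaw, Measure.map_apply hX measurableSet_Ioi]
  rfl

lemma ae_nonneg_of_map_eq_expMeasure {X : Ω → ℝ} (hX : Measurable X) {r : ℝ} (hr : 0 < r)
    (hlaw : P.map X = expMeasure r) : ∀ᵐ ω ∂P, 0 ≤ X ω := by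
  have h : P (X ⁻¹' Iio 0) = 0 := by
    rw [← Measure.map_apply hX measurableSet_Iio, hlaw, expMeasure_Iio_zero hr]
  filter_upwards [measure_eq_zero_iff_ae_notMem.mp h] with ω hω
  simpa using hω

end Laws

section Independence

variable {Ω : Type*} {m mΩ : MeasurableSpace Ω} {P : Measure Ω} {T : Ω → ℝ}

lemma setLIntegral_lt_eq_mul_of_indep (hm : m ≤ mΩ) (hT : Measurable T)
    (hindep : Indep (MeasurableSpace.comap T Real.measurableSpace) m P) {g : Ω → ℝ≥0∞}
    (hg : Measurable[m] g) (s : ℝ) :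
    ∫⁻ ω in {ω | s < T ω}, g ω ∂P = P {ω | s < T ω} * ∫⁻ ω, g ω ∂P := by
  have hS : MeasurableSet {ω | s < T ω} := hT measurableSet_Ioi
  have hind : {ω | s < T ω}.indicator g = fun ω => {ω | s < T ω}.indicator 1 ω * g ω := by
    ext ω
    by_cases hω : s < T ω <;> simp [hω]
  have hS_T : Measurable[MeasurableSpace.comap T Real.measurableSpace]
      ({ω | s < T ω}.indicator (1 : Ω → ℝ≥0∞)) :=
    measurable_const.indicator ⟨Ioi s, measurableSet_Ioi, rfl⟩
  rw [← lintegral_indicator hS, hind,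
    lintegral_mul_eq_lintegral_mul_lintegral_of_independent_measurableSpace (mΩ := mΩ)
      (measurable_iff_comap_le.mp hT) hm hindep hS_T hg, lintegral_indicator_one hS]

lemma lintegral_setLIntegral_Ioo_eq_of_indep [SFinite P] (hm : m ≤ mΩ) (hT : Measurable T)
    (hindep : Indep (MeasurableSpace.comap T Real.measurableSpace) m P) {F : ℝ → Ω → ℝ≥0∞}
    (hF : Measurable (Function.uncurry F)) (hFm : ∀ s, Measurable[m] (F s)) :
    ∫⁻ ω, (∫⁻ s in Ioo 0 (T ω), F s ω) ∂P = ∫⁻ s in Ioi 0, P {ω | s < T ω} * ∫⁻ ω, F s ω ∂P := by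
  have hIoo : ∀ ω, ∫⁻ s in Ioo 0 (T ω), F s ω = ∫⁻ s in Ioi 0, {ω | s < T ω}.indicator (F s) ω := by
    intro ω
    rw [← Iio_inter_Ioi, ← Measure.restrict_restrict measurableSet_Iio,
      ← lintegral_indicator measurableSet_Iio]
    rfl
  have hmeas : Measurable (Function.uncurry fun ω s => {ω | s < T ω}.indicator (F s) ω) :=
    (hF.comp measurable_swap).indicator (measurableSet_lt measurable_snd (hT.comp measurable_fst))
  simp_rw [hIoo]
  rw [lintegral_lintegral_swap hmeas.aemeasurable]
  refine setLIntegral_congr_fun measurableSet_Ioi fun s _ => ?_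
  have hs : MeasurableSet {ω | s < T ω} := hT measurableSet_Ioi
  rw [← setLIntegral_lt_eq_mul_of_indep hm hT hindep (hFm s) s, lintegral_indicator hs]

end Independence

namespace IsStandardBM

variable {Ω : Type*} {mΩ : MeasurableSpace Ω} {P : Measure Ω} {W : ℝ → Ω → ℝ}

lemma lintegral_exp_mul_sub (hW : IsStandardBM P W) (c : ℝ) {s t : ℝ} (hs : 0 ≤ s)
    (hst : s ≤ t) :
    ∫⁻ ω, ENNReal.ofReal (exp (c * (W t ω - W s ω))) ∂P
      = ENNReal.ofReal (exp ((t - s) * c ^ 2 / 2)) := by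
  rw [lintegral_exp_mul_of_map_eq_gaussianReal (hW.2.2.2.1 s t hs hst),
    Real.coe_toNNReal _ (sub_nonneg.mpr hst)]

lemma lintegral_exp_mul (hW : IsStandardBM P W) (c : ℝ) {t : ℝ} (ht : 0 ≤ t) :
    ∫⁻ ω, ENNReal.ofReal (exp (c * W t ω)) ∂P = ENNReal.ofReal (exp (t * c ^ 2 / 2)) := by
  simpa [hW.2.1] using hW.lintegral_exp_mul_sub c le_rfl ht

lemma indepFun_sub (hW : IsStandardBM P W) {s t : ℝ} (hs : 0 ≤ s) (hst : s ≤ t) :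
    IndepFun (W s) (fun ω => W t ω - W s ω) P := by
  let u : ℕ → ℝ := fun n => if n = 0 then 0 else if n = 1 then s else t
  have hu : Monotone u := monotone_nat_of_le_succ fun n => by
    match n with
    | 0 => simpa [u] using hs
    | 1 => simpa [u] using hst
    | n + 2 => simp [u]
  have h := (hW.2.2.2.2 2 u hu le_rfl).indepFun (show (0 : Fin 2) ≠ 1 by decide)
  simpa [u, hW.2.1] using h

lemma lintegral_exp_mul_mul_exp_mul_sub (hW : IsStandardBM P W) (c₁ c₂ : ℝ) {s t : ℝ}
    (hs : 0 ≤ s) (hst : s ≤ t) :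
    ∫⁻ ω, ENNReal.ofReal (exp (c₁ * W s ω)) * ENNReal.ofReal (exp (c₂ * (W t ω - W s ω))) ∂P
      = ENNReal.ofReal (exp (s * c₁ ^ 2 / 2)) * ENNReal.ofReal (exp ((t - s) * c₂ ^ 2 / 2)) := by
  have hφ : ∀ c : ℝ, Measurable fun x : ℝ => ENNReal.ofReal (exp (c * x)) := fun c => by
    fun_prop
  rw [← hW.lintegral_exp_mul c₁ hs, ← hW.lintegral_exp_mul_sub c₂ hs hst]
  exact lintegral_mul_eq_lintegral_mul_lintegral_of_indepFun ((hφ c₁).comp (hW.1 s))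
    ((hφ c₂).comp ((hW.1 t).sub (hW.1 s))) ((hW.indepFun_sub hs hst).comp (hφ c₁) (hφ c₂))

end IsStandardBM

section Drift

variable {Ω : Type*} {mΩ : MeasurableSpace Ω} {P : Measure Ω} {W : ℝ → Ω → ℝ} {σ b : ℝ}

/-- The paper's `e^{-V_s}`, with `b = a - σ²/2`. -/
noncomputable def expNegDrift (W : ℝ → Ω → ℝ) (σ b s : ℝ) (ω : Ω) : ℝ≥0∞ :=
  ENNReal.ofReal (exp (-(σ * W s ω + b * s)))

/-- The growth rate of `t ↦ E[e^{-βV_t}]`, the paper's `½σ²β(β - β̃)`. -/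
noncomputable def momentExponent (σ b β : ℝ) : ℝ := σ ^ 2 * β ^ 2 / 2 - β * b

lemma expNegDrift_ne_zero (s : ℝ) (ω : Ω) : expNegDrift W σ b s ω ≠ 0 :=
  (ENNReal.ofReal_pos.mpr (exp_pos _)).ne'

lemma rpow_setLIntegral_expNegDrift_le {β : ℝ} (hβ0 : 0 ≤ β) (hβ1 : β ≤ 1) (k : ℝ) (I : Set ℝ)
    (ω : Ω) :
    (∫⁻ s in I, expNegDrift W σ b s ω) ^ β
      ≤ expNegDrift W σ b k ω ^ β
        + ∫⁻ s in I, expNegDrift W σ b k ω ^ (β - 1) * expNegDrift W σ b s ω := by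
  rw [lintegral_const_mul' _ _
    (ENNReal.rpow_ne_top_of_ne_zero (expNegDrift_ne_zero k ω) ENNReal.ofReal_ne_top)]
  exact ENNReal.rpow_le_rpow_add_rpow_sub_one_mul _ (expNegDrift_ne_zero k ω)
    ENNReal.ofReal_ne_top hβ0 hβ1

lemma measurable_expNegDrift {m : MeasurableSpace Ω} (hW : ∀ t, Measurable[m] (W t)) (s : ℝ) :
    Measurable[m] (expNegDrift W σ b s) := by
  unfold expNegDrift
  fun_prop

lemma measurable_uncurry_expNegDrift (hW : IsStandardBM P W) :
    Measurable (Function.uncurry (expNegDrift W σ b)) := by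
  have hWu : Measurable (Function.uncurry W) :=
    measurable_uncurry_of_continuous_of_measurable hW.2.2.1 hW.1
  unfold expNegDrift Function.uncurry
  fun_prop

lemma expNegDrift_rpow (β s : ℝ) (ω : Ω) :
    expNegDrift W σ b s ω ^ β
      = ENNReal.ofReal (exp (-(β * b * s))) * ENNReal.ofReal (exp (-(β * σ) * W s ω)) := by
  rw [expNegDrift, ENNReal.ofReal_exp_rpow, ENNReal.ofReal_exp_mul_ofReal_exp]
  ring_nf

lemma IsStandardBM.lintegral_expNegDrift_rpow (hW : IsStandardBM P W) (β : ℝ) {t : ℝ}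
    (ht : 0 ≤ t) :
    ∫⁻ ω, expNegDrift W σ b t ω ^ β ∂P = ENNReal.ofReal (exp (momentExponent σ b β * t)) := by
  simp_rw [expNegDrift_rpow]
  rw [lintegral_const_mul' _ _ ENNReal.ofReal_ne_top, hW.lintegral_exp_mul _ ht,
    ENNReal.ofReal_exp_mul_ofReal_exp, momentExponent]
  ring_nf

lemma IsStandardBM.lintegral_expNegDrift_rpow_mul_expNegDrift (hW : IsStandardBM P W) (β : ℝ)
    {s t : ℝ} (hs : 0 ≤ s) (hst : s ≤ t) :
    ∫⁻ ω, expNegDrift W σ b s ω ^ (β - 1) * expNegDrift W σ b t ω ∂P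
      = ENNReal.ofReal (exp (momentExponent σ b β * s + momentExponent σ b 1 * (t - s))) := by
  have h : ∀ ω, expNegDrift W σ b s ω ^ (β - 1) * expNegDrift W σ b t ω
      = ENNReal.ofReal (exp (-(b * ((β - 1) * s + t)))) * (ENNReal.ofReal
          (exp (-(β * σ) * W s ω)) * ENNReal.ofReal (exp (-σ * (W t ω - W s ω)))) := fun ω => by
    simp only [expNegDrift, ENNReal.ofReal_exp_rpow, ENNReal.ofReal_exp_mul_ofReal_exp]
    ring_nf
  simp_rw [h]
  rw [lintegral_const_mul' _ _ ENNReal.ofReal_ne_top,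
    hW.lintegral_exp_mul_mul_exp_mul_sub _ _ hs hst, ENNReal.ofReal_exp_mul_ofReal_exp,
    ENNReal.ofReal_exp_mul_ofReal_exp, momentExponent, momentExponent]
  ring_nf

end Drift

section Moments

variable {Ω : Type*} {m mΩ : MeasurableSpace Ω} {P : Measure Ω} {W : ℝ → Ω → ℝ} {T : Ω → ℝ}
  {lam σ b β : ℝ}

lemma setLIntegral_lt_expNegDrift_rpow_sub_one_mul_le (hW : IsStandardBM P W)
    (hm : m ≤ mΩ) (hWm : ∀ t, Measurable[m] (W t)) (hT : Measurable T)
    (hindep : Indep (MeasurableSpace.comap T Real.measurableSpace) m P)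
    {k s : ℝ} (hk : 0 ≤ k) (hs : s ∈ Ico k (k + 1)) :
    ∫⁻ ω in {ω | k < T ω}, expNegDrift W σ b k ω ^ (β - 1) * expNegDrift W σ b s ω ∂P
      ≤ P {ω | k < T ω} * (ENNReal.ofReal (exp (momentExponent σ b β * k))
        * ENNReal.ofReal (exp |momentExponent σ b 1|)) := by
  have hG : Measurable[m] fun ω => expNegDrift W σ b k ω ^ (β - 1) * expNegDrift W σ b s ω :=
    ((measurable_expNegDrift hWm k).pow_const _).mul (measurable_expNegDrift hWm s)
  rw [setLIntegral_lt_eq_mul_of_indep hm hT hindep hG,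
    hW.lintegral_expNegDrift_rpow_mul_expNegDrift β hk hs.1, ← ENNReal.ofReal_exp_mul_ofReal_exp]
  gcongr
  calc momentExponent σ b 1 * (s - k) ≤ |momentExponent σ b 1| * (s - k) := by
        gcongr
        · linarith [hs.1]
        · exact le_abs_self _
    _ ≤ |momentExponent σ b 1| := by nlinarith [hs.2, abs_nonneg (momentExponent σ b 1)]

variable [SFinite P]

lemma lintegral_setLIntegral_Ioo_exp_mul_expNegDrift_rpow (hW : IsStandardBM P W)
    (hm : m ≤ mΩ) (hWm : ∀ t, Measurable[m] (W t)) (hT : Measurable T)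
    (hindep : Indep (MeasurableSpace.comap T Real.measurableSpace) m P)
    (htail : ∀ s, 0 ≤ s → P {ω | s < T ω} = ENNReal.ofReal (exp (-(lam * s)))) (γ : ℝ) :
    ∫⁻ ω, (∫⁻ s in Ioo 0 (T ω), ENNReal.ofReal (exp (γ * s)) * expNegDrift W σ b s ω ^ β) ∂P
      = ∫⁻ s in Ioi 0, ENNReal.ofReal (exp (-(lam - γ - momentExponent σ b β) * s)) := by
  have hF : Measurable (Function.uncurry fun s ω =>
      ENNReal.ofReal (exp (γ * s)) * expNegDrift W σ b s ω ^ β) :=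
    (by fun_prop : Measurable fun q : ℝ × Ω => ENNReal.ofReal (exp (γ * q.1))).mul
      ((measurable_uncurry_expNegDrift hW).pow_const β)
  have hFm : ∀ s, Measurable[m] fun ω =>
      ENNReal.ofReal (exp (γ * s)) * expNegDrift W σ b s ω ^ β :=
    fun s => ((measurable_expNegDrift hWm s).pow_const β).const_mul _
  rw [lintegral_setLIntegral_Ioo_eq_of_indep hm hT hindep hF hFm]
  refine setLIntegral_congr_fun measurableSet_Ioi fun s (hs : 0 < s) => ?_
  rw [htail s hs.le, lintegral_const_mul' _ _ ENNReal.ofReal_ne_top,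
    hW.lintegral_expNegDrift_rpow β hs.le, ENNReal.ofReal_exp_mul_ofReal_exp,
    ENNReal.ofReal_exp_mul_ofReal_exp]
  ring_nf

lemma lintegral_rpow_setLIntegral_expNegDrift_lt_top_of_one_lt (hW : IsStandardBM P W)
    (hm : m ≤ mΩ) (hWm : ∀ t, Measurable[m] (W t)) (hT : Measurable T)
    (hindep : Indep (MeasurableSpace.comap T Real.measurableSpace) m P)
    (htail : ∀ s, 0 ≤ s → P {ω | s < T ω} = ENNReal.ofReal (exp (-(lam * s))))
    (hβ : 1 < β) (hρ : momentExponent σ b β < lam) :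
    ∫⁻ ω, (∫⁻ s in Ioo 0 (T ω), expNegDrift W σ b s ω) ^ β ∂P < ⊤ := by
  set δ := (lam - momentExponent σ b β) / (2 * β)
  have hδ : 0 < δ := div_pos (by linarith) (by linarith)
  have hrate : 0 < lam - β * δ - momentExponent σ b β := by
    have : β * δ = (lam - momentExponent σ b β) / 2 := by
      simp only [δ]
      field_simp
    linarith
  set p := β.conjExponent
  have hpβ : p.HolderConjugate β := (Real.HolderConjugate.conjExponent hβ).symm
  set C := (∫⁻ s in Ioi 0, ENNReal.ofReal (exp (-(p * δ) * s))) ^ (β - 1)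
  have hC : C ≠ ⊤ := (ENNReal.rpow_lt_top_of_nonneg hpβ.symm.sub_one_pos.le
    (exp_neg_integrableOn_Ioi 0 (mul_pos hpβ.pos hδ)).lintegral_lt_top.ne).ne
  calc ∫⁻ ω, (∫⁻ s in Ioo 0 (T ω), expNegDrift W σ b s ω) ^ β ∂P
      ≤ ∫⁻ ω, C * (∫⁻ s in Ioo 0 (T ω),
          ENNReal.ofReal (exp (β * δ * s)) * expNegDrift W σ b s ω ^ β) ∂P :=
        lintegral_mono fun ω => rpow_setLIntegral_Ioo_le_of_holderConjugate
          ((measurable_uncurry_expNegDrift hW).comp (measurable_id.prodMk measurable_const))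
          hpβ δ _
    _ = C * ∫⁻ s in Ioi 0, ENNReal.ofReal (exp (-(lam - β * δ - momentExponent σ b β) * s)) := by
        rw [lintegral_const_mul' _ _ hC,
          lintegral_setLIntegral_Ioo_exp_mul_expNegDrift_rpow hW hm hWm hT hindep htail]
    _ < ⊤ := ENNReal.mul_lt_top hC.lt_top (exp_neg_integrableOn_Ioi 0 hrate).lintegral_lt_top

lemma setLIntegral_lt_rpow_setLIntegral_Ico_expNegDrift_le (hW : IsStandardBM P W)
    (hm : m ≤ mΩ) (hWm : ∀ t, Measurable[m] (W t)) (hT : Measurable T)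
    (hindep : Indep (MeasurableSpace.comap T Real.measurableSpace) m P)
    (hβ0 : 0 ≤ β) (hβ1 : β ≤ 1) {k : ℝ} (hk : 0 ≤ k) :
    ∫⁻ ω in {ω | k < T ω}, (∫⁻ s in Ico k (k + 1), expNegDrift W σ b s ω) ^ β ∂P
      ≤ P {ω | k < T ω} * (ENNReal.ofReal (exp (momentExponent σ b β * k))
        * (1 + ENNReal.ofReal (exp |momentExponent σ b 1|))) := by
  set E := expNegDrift W σ b
  have hE : Measurable (Function.uncurry E) := measurable_uncurry_expNegDrift hW
  have hEk : Measurable fun ω => E k ω ^ β :=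
    (hE.comp (measurable_const.prodMk measurable_id)).pow_const β
  have hG : Measurable (Function.uncurry fun ω s => E k ω ^ (β - 1) * E s ω) :=
    ((hE.comp (measurable_const.prodMk measurable_fst)).pow_const _).mul (hE.comp measurable_swap)
  calc ∫⁻ ω in {ω | k < T ω}, (∫⁻ s in Ico k (k + 1), E s ω) ^ β ∂P
      ≤ ∫⁻ ω in {ω | k < T ω}, E k ω ^ β ∂P
        + ∫⁻ ω in {ω | k < T ω}, (∫⁻ s in Ico k (k + 1), E k ω ^ (β - 1) * E s ω) ∂P := by
        rw [← lintegral_add_left hEk]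
        exact lintegral_mono fun ω => rpow_setLIntegral_expNegDrift_le hβ0 hβ1 k _ ω
    _ = P {ω | k < T ω} * ENNReal.ofReal (exp (momentExponent σ b β * k))
        + ∫⁻ s in Ico k (k + 1), ∫⁻ ω in {ω | k < T ω}, E k ω ^ (β - 1) * E s ω ∂P := by
        rw [setLIntegral_lt_eq_mul_of_indep hm hT hindep
          ((measurable_expNegDrift hWm k).pow_const β), hW.lintegral_expNegDrift_rpow β hk,
          lintegral_lintegral_swap hG.aemeasurable]
    _ ≤ P {ω | k < T ω} * ENNReal.ofReal (exp (momentExponent σ b β * k))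
        + ∫⁻ s in Ico k (k + 1), P {ω | k < T ω} * (ENNReal.ofReal
          (exp (momentExponent σ b β * k)) * ENNReal.ofReal (exp |momentExponent σ b 1|)) :=
        add_le_add le_rfl (setLIntegral_mono' measurableSet_Ico fun s hs =>
          setLIntegral_lt_expNegDrift_rpow_sub_one_mul_le hW hm hWm hT hindep hk hs)
    _ = _ := by
        rw [setLIntegral_const, Real.volume_Ico, add_sub_cancel_left, ENNReal.ofReal_one, mul_one]
        ring

lemma lintegral_rpow_setLIntegral_expNegDrift_lt_top_of_le_one (hW : IsStandardBM P W)
    (hm : m ≤ mΩ) (hWm : ∀ t, Measurable[m] (W t)) (hT : Measurable T)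
    (hindep : Indep (MeasurableSpace.comap T Real.measurableSpace) m P)
    (htail : ∀ s, 0 ≤ s → P {ω | s < T ω} = ENNReal.ofReal (exp (-(lam * s))))
    (hβ0 : 0 < β) (hβ1 : β ≤ 1) (hρ : momentExponent σ b β < lam) :
    ∫⁻ ω, (∫⁻ s in Ioo 0 (T ω), expNegDrift W σ b s ω) ^ β ∂P < ⊤ := by
  have hblock : ∀ k : ℕ, ∫⁻ ω in {ω | (k : ℝ) < T ω},
      (∫⁻ s in Ico (k : ℝ) (k + 1), expNegDrift W σ b s ω) ^ β ∂P
        ≤ (1 + ENNReal.ofReal (exp |momentExponent σ b 1|))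
          * ENNReal.ofReal (exp (momentExponent σ b β - lam)) ^ k := by
    intro k
    refine (setLIntegral_lt_rpow_setLIntegral_Ico_expNegDrift_le hW hm hWm hT hindep hβ0.le hβ1
      k.cast_nonneg).trans (le_of_eq ?_)
    rw [htail _ k.cast_nonneg, ← mul_assoc, ENNReal.ofReal_exp_mul_ofReal_exp,
      ← ENNReal.ofReal_pow (exp_nonneg _), ← exp_nat_mul, mul_comm]
    ring_nf
  set E := expNegDrift W σ b
  set C := 1 + ENNReal.ofReal (exp |momentExponent σ b 1|)
  set r := ENNReal.ofReal (exp (momentExponent σ b β - lam))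
  have hX : ∀ k : ℕ, Measurable fun ω =>
      if (k : ℝ) < T ω then (∫⁻ s in Ico (k : ℝ) (k + 1), E s ω) ^ β else 0 := fun k =>
    Measurable.ite (hT measurableSet_Ioi)
      ((measurable_uncurry_expNegDrift hW).lintegral_prod_left'.pow_const β) measurable_const
  calc ∫⁻ ω, (∫⁻ s in Ioo 0 (T ω), E s ω) ^ β ∂P
      ≤ ∫⁻ ω, ∑' k : ℕ,
          if (k : ℝ) < T ω then (∫⁻ s in Ico (k : ℝ) (k + 1), E s ω) ^ β else 0 ∂P :=
        lintegral_mono fun ω => rpow_setLIntegral_Ioo_le_tsum _ _ hβ0 hβ1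
    _ = ∑' k : ℕ, ∫⁻ ω in {ω | (k : ℝ) < T ω}, (∫⁻ s in Ico (k : ℝ) (k + 1), E s ω) ^ β ∂P := by
        rw [lintegral_tsum fun k => (hX k).aemeasurable]
        refine tsum_congr fun k => ?_
        have hk : MeasurableSet {ω | (k : ℝ) < T ω} := hT measurableSet_Ioi
        rw [← lintegral_indicator hk]
        congr 1
    _ ≤ ∑' k : ℕ, C * r ^ k := ENNReal.tsum_le_tsum hblock
    _ < ⊤ := by
        rw [ENNReal.tsum_mul_left, ENNReal.tsum_geometric]
        refine ENNReal.mul_lt_top (ENNReal.add_lt_top.mpr ⟨ENNReal.one_lt_top,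
          ENNReal.ofReal_lt_top⟩) (ENNReal.inv_lt_top.mpr (tsub_pos_of_lt ?_))
        rw [ENNReal.ofReal_lt_one, exp_lt_one_iff]
        linarith

end Moments

theorem finite_beta_moment_integral_exp_neg_V_up_to_exponential_time_general
    {Ω : Type*} [MeasurableSpace Ω] (P : Measure Ω) [IsProbabilityMeasure P]
    (W : ℝ → Ω → ℝ) (T : Ω → ℝ) (lam σ a β : ℝ)
    (hW : IsStandardBM P W) (hT : Measurable T) (hlam : 0 < lam)
    (hTlaw : Measure.map T P = expMeasure lam)
    (hindep : Indep (MeasurableSpace.comap T Real.measurableSpace)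
      (⨆ t : ℝ, MeasurableSpace.comap (W t) Real.measurableSpace) P)
    (hσ : 0 < σ) (hβ : 0 < β)
    (hden : 0 < 1 / 2 * σ ^ 2 * β * ((2 * a / σ ^ 2 - 1) - β) + lam) :
    ∫⁻ ω, ENNReal.ofReal
        ((∫ s in (0:ℝ)..(T ω), Real.exp (-(σ * W s ω + (a - σ ^ 2 / 2) * s))) ^ β) ∂P < ⊤ := by
  have hρ : momentExponent σ (a - σ ^ 2 / 2) β < lam := by
    have h : momentExponent σ (a - σ ^ 2 / 2) β
        = -(1 / 2 * σ ^ 2 * β * ((2 * a / σ ^ 2 - 1) - β)) := by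
      rw [momentExponent]
      field_simp
      ring
    linarith
  have hm : (⨆ t : ℝ, MeasurableSpace.comap (W t) Real.measurableSpace) ≤ ‹MeasurableSpace Ω› :=
    iSup_le fun t => (hW.1 t).comap_le
  have hWm : ∀ t, Measurable[⨆ t : ℝ, MeasurableSpace.comap (W t) Real.measurableSpace] (W t) :=
    fun t => Measurable.of_comap_le (le_iSup (fun t => MeasurableSpace.comap (W t) _) t)
  have htail := fun s (hs : 0 ≤ s) => measure_lt_of_map_eq_expMeasure hT hlam hTlaw hs
  have hfinite : ∫⁻ ω, (∫⁻ s in Ioo 0 (T ω), expNegDrift W σ (a - σ ^ 2 / 2) s ω) ^ β ∂P < ⊤ := by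
    rcases le_or_gt β 1 with hβ1 | hβ1
    · exact lintegral_rpow_setLIntegral_expNegDrift_lt_top_of_le_one hW hm hWm hT hindep htail
        hβ hβ1 hρ
    · exact lintegral_rpow_setLIntegral_expNegDrift_lt_top_of_one_lt hW hm hWm hT hindep htail
        hβ1 hρ
  refine (le_of_eq (lintegral_congr_ae ?_)).trans_lt hfinite
  filter_upwards [ae_nonneg_of_map_eq_expMeasure hT hlam hTlaw] with ω hω
  have hWω := hW.2.2.1 ω
  have hcont : Continuous fun s => exp (-(σ * W s ω + (a - σ ^ 2 / 2) * s)) := by fun_prop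
  exact ofReal_intervalIntegral_rpow_eq (hcont.intervalIntegrable _ _) (fun s => exp_nonneg _) hω
    hβ.le

theorem finite_beta_moment_integral_exp_neg_V_up_to_exponential_time
    {Ω : Type*} [MeasurableSpace Ω] (P : Measure Ω) [IsProbabilityMeasure P]
    (W : ℝ → Ω → ℝ) (T : Ω → ℝ) (lam σ a β : ℝ)
    (hW : IsStandardBM P W) (hT : Measurable T) (hlam : 0 < lam)
    (hTlaw : Measure.map T P = expMeasure lam)
    (hindep : Indep (MeasurableSpace.comap T Real.measurableSpace)
      (⨆ t : ℝ, MeasurableSpace.comap (W t) Real.measurableSpace) P)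
    (hσ : 0 < σ) (hβ : 0 < β)
    (hden : 0 < 1 / 2 * σ ^ 2 * β * ((2 * a / σ ^ 2 - 1) - β) + lam)
    (hp : ∃ p : ℝ, 1 < p ∧ 0 < β / p - (2 * a / σ ^ 2 - 1)) :
    ∫⁻ ω, ENNReal.ofReal
        ((∫ s in (0:ℝ)..(T ω), Real.exp (-(σ * W s ω + (a - σ ^ 2 / 2) * s))) ^ β) ∂P < ⊤ :=
  finite_beta_moment_integral_exp_neg_V_up_to_exponential_time_general P W T lam σ a β hW hT hlam
    hTlaw hindep hσ hβ hden
end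

section
/- Let ((M_k, Q_k))_{k≥1} be an i.i.d. sequence of pairs of real random variables with M_k > 0 almost surely, and suppose that for some p ∈ (0,1] one has r := E[M_1^p] < 1 and E[|Q_1|^p] < ∞. Then E[ (∑_{n≥1} |M_1 ⋯ M_{n−1} Q_n|)^p ] ≤ E[|Q_1|^p]/(1 − r) < ∞, and in particular the series ∑_{n≥1} M_1 ⋯ M_{n−1} Q_n (with the empty product for n = 1 equal to 1) converges absolutely almost surely. -/
/-!
For `p ≤ 1` the map `x ↦ x ^ p` is subadditive on `[0, ∞]`, so the `p`-th power of the series is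
at most the series of `p`-th powers. By independence and identical distribution the `n`-th of
these has expectation `r ^ n * E |Q|^p`, and summing the geometric series gives the bound. A
finite `p`-th moment forces the series to be finite almost surely.
-/

open MeasureTheory ProbabilityTheory
open scoped ENNReal

namespace ENNReal

theorem rpow_tsum_le_tsum_rpow {ι : Type*} {p : ℝ} (hp0 : 0 < p) (hp1 : p ≤ 1) (f : ι → ℝ≥0∞) :
    (∑' i, f i) ^ p ≤ ∑' i, f i ^ p := by
  have hsum (s : Finset ι) : (∑ i ∈ s, f i) ^ p ≤ ∑ i ∈ s, f i ^ p :=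
    Finset.le_sum_of_subadditive (· ^ p) (zero_rpow_of_pos hp0).le
      (fun a b => rpow_add_le_add_rpow a b hp0.le hp1) s f
  calc (∑' i, f i) ^ p = ⨆ s : Finset ι, (∑ i ∈ s, f i) ^ p := by
        rw [ENNReal.tsum_eq_iSup_sum]
        simpa only [orderIsoRpow_apply] using
          (orderIsoRpow p hp0).map_iSup fun s : Finset ι => ∑ i ∈ s, f i
    _ ≤ ⨆ s : Finset ι, ∑ i ∈ s, f i ^ p := iSup_mono hsum
    _ = ∑' i, f i ^ p := ENNReal.tsum_eq_iSup_sum.symm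

theorem ofReal_prod_mul_rpow {ι : Type*} {s : Finset ι} {a : ι → ℝ} (ha : ∀ i ∈ s, 0 ≤ a i)
    {b p : ℝ} (hb : 0 ≤ b) (hp : 0 ≤ p) :
    ENNReal.ofReal ((∏ i ∈ s, a i) * b) ^ p
      = (∏ i ∈ s, ENNReal.ofReal (a i ^ p)) * ENNReal.ofReal (b ^ p) := by
  rw [ofReal_mul (Finset.prod_nonneg ha), ofReal_prod_of_nonneg ha, mul_rpow_of_nonneg _ _ hp,
    ← prod_rpow_of_nonneg hp, ofReal_rpow_of_nonneg hb hp]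
  congr 1
  exact Finset.prod_congr rfl fun i hi => ofReal_rpow_of_nonneg (ha i hi) hp

end ENNReal

namespace ProbabilityTheory

variable {Ω β : Type*} [MeasurableSpace Ω] [MeasurableSpace β] {P : Measure Ω}

theorem iIndepFun.lintegral_prod_comp {ι : Type*} {R : ι → Ω → β} (hR : iIndepFun R P)
    {f : ι → β → ℝ≥0∞} (hf : ∀ i, Measurable (f i)) (hmeas : ∀ i, Measurable (R i))
    (s : Finset ι) :
    ∫⁻ ω, ∏ i ∈ s, f i (R i ω) ∂P = ∏ i ∈ s, ∫⁻ ω, f i (R i ω) ∂P :=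
  lintegral_prod_eq_prod_lintegral_of_indepFun s (fun i => f i ∘ R i) (hR.comp f hf)
    fun i => (hf i).comp (hmeas i)

theorem iIndepFun.lintegral_prod_range_mul_of_identDistrib {R : ℕ → Ω → β}
    (hR : iIndepFun R P) (hmeas : ∀ k, Measurable (R k))
    (hident : ∀ k, Measure.map (R k) P = Measure.map (R 0) P)
    {g h : β → ℝ≥0∞} (hg : Measurable g) (hh : Measurable h) (n : ℕ) :
    ∫⁻ ω, (∏ j ∈ Finset.range n, g (R j ω)) * h (R n ω) ∂P
      = (∫⁻ ω, g (R 0 ω) ∂P) ^ n * ∫⁻ ω, h (R 0 ω) ∂P := by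
  have hsame {u : β → ℝ≥0∞} (hu : Measurable u) (k : ℕ) :
      ∫⁻ ω, u (R k ω) ∂P = ∫⁻ ω, u (R 0 ω) ∂P :=
    (IdentDistrib.comp ⟨(hmeas k).aemeasurable, (hmeas 0).aemeasurable, hident k⟩ hu).lintegral_eq
  -- `h` at index `n`, `g` elsewhere: the integrand is one product over an independent family
  let f : ℕ → β → ℝ≥0∞ := fun j => if j = n then h else g
  have hf : ∀ j, Measurable (f j) := fun j => by dsimp only [f]; split_ifs <;> assumption
  have hsplit (F : ℕ → (β → ℝ≥0∞) → ℝ≥0∞) :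
      ∏ j ∈ Finset.range (n + 1), F j (f j) = (∏ j ∈ Finset.range n, F j g) * F n h := by
    rw [Finset.prod_range_succ]
    simp only [f, if_pos rfl]
    congr 1
    exact Finset.prod_congr rfl fun j hj => by rw [if_neg (Finset.mem_range.mp hj).ne]
  have hprod := hR.lintegral_prod_comp hf hmeas (Finset.range (n + 1))
  rw [hsplit fun j u => ∫⁻ ω, u (R j ω) ∂P] at hprod
  rw [lintegral_congr fun ω => hsplit fun j u => u (R j ω)] at hprod
  rw [hprod, hsame hh, Finset.prod_congr rfl fun j _ => hsame hg j, Finset.prod_const,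
    Finset.card_range]

end ProbabilityTheory

namespace MeasureTheory

variable {Ω : Type*} [MeasurableSpace Ω] {P : Measure Ω} {f : ℕ → Ω → ℝ≥0∞}

theorem lintegral_rpow_tsum_le_of_lintegral_rpow_eq_geometric (hf : ∀ n, AEMeasurable (f n) P)
    {p : ℝ} (hp0 : 0 < p) (hp1 : p ≤ 1) {r c : ℝ≥0∞}
    (hgeom : ∀ n, ∫⁻ ω, f n ω ^ p ∂P = r ^ n * c) :
    ∫⁻ ω, (∑' n, f n ω) ^ p ∂P ≤ c / (1 - r) :=
  calc ∫⁻ ω, (∑' n, f n ω) ^ p ∂P ≤ ∫⁻ ω, ∑' n, f n ω ^ p ∂P :=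
        lintegral_mono fun ω => ENNReal.rpow_tsum_le_tsum_rpow hp0 hp1 _
    _ = ∑' n, r ^ n * c := by
        rw [lintegral_tsum fun n => (hf n).pow_const p]
        exact tsum_congr hgeom
    _ = c / (1 - r) := by
        rw [ENNReal.tsum_mul_right, ENNReal.tsum_geometric, ENNReal.div_eq_inv_mul]

theorem ae_summable_toReal_of_lintegral_rpow_tsum_lt_top (hf : ∀ n, AEMeasurable (f n) P)
    {p : ℝ} (hp : 0 < p) (hint : ∫⁻ ω, (∑' n, f n ω) ^ p ∂P < ⊤) :
    ∀ᵐ ω ∂P, Summable fun n => (f n ω).toReal := by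
  filter_upwards [ae_lt_top' ((AEMeasurable.tsum hf).pow_const p) hint.ne] with ω hω
  exact ENNReal.summable_toReal ((ENNReal.rpow_lt_top_iff_of_pos hp).mp hω).ne

end MeasureTheory

theorem perpetuity_series_moment_bound_and_convergence_general
    {Ω : Type*} [MeasurableSpace Ω] (P : Measure Ω)
    (R : ℕ → Ω → ℝ × ℝ) (p : ℝ)
    (hmeas : ∀ k, Measurable (R k))
    (hindep : iIndepFun R P)
    (hident : ∀ k, Measure.map (R k) P = Measure.map (R 0) P)
    (hMpos : ∀ k, ∀ᵐ ω ∂P, 0 < (R k ω).1)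
    (hp0 : 0 < p) (hp1 : p ≤ 1)
    (hM : ∫⁻ ω, ENNReal.ofReal ((R 0 ω).1 ^ p) ∂P < 1)
    (hQ : ∫⁻ ω, ENNReal.ofReal (|(R 0 ω).2| ^ p) ∂P < ⊤) :
    (∫⁻ ω, (∑' n : ℕ, ENNReal.ofReal ((∏ j ∈ Finset.range n, (R j ω).1) * |(R n ω).2|)) ^ p ∂P
        ≤ (∫⁻ ω, ENNReal.ofReal (|(R 0 ω).2| ^ p) ∂P)
            / (1 - ∫⁻ ω, ENNReal.ofReal ((R 0 ω).1 ^ p) ∂P)) ∧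
    (∫⁻ ω, (∑' n : ℕ, ENNReal.ofReal ((∏ j ∈ Finset.range n, (R j ω).1) * |(R n ω).2|)) ^ p ∂P
        < ⊤) ∧
    (∀ᵐ ω ∂P, Summable fun n : ℕ => |(∏ j ∈ Finset.range n, (R j ω).1) * (R n ω).2|) := by
  set X : ℕ → Ω → ℝ≥0∞ := fun n ω =>
    ENNReal.ofReal ((∏ j ∈ Finset.range n, (R j ω).1) * |(R n ω).2|)
  have hX : ∀ n, AEMeasurable (X n) P := fun n => by fun_prop
  have hpos : ∀ᵐ ω ∂P, ∀ k, 0 < (R k ω).1 := ae_all_iff.mpr hMpos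
  have hbound := lintegral_rpow_tsum_le_of_lintegral_rpow_eq_geometric hX hp0 hp1 fun n => by
    rw [lintegral_congr_ae (hpos.mono fun ω hω =>
      ENNReal.ofReal_prod_mul_rpow (fun j _ => (hω j).le) (abs_nonneg _) hp0.le)]
    exact hindep.lintegral_prod_range_mul_of_identDistrib hmeas hident
      (g := fun x => ENNReal.ofReal (x.1 ^ p)) (h := fun x => ENNReal.ofReal (|x.2| ^ p))
      (by fun_prop) (by fun_prop) n
  have hfinite := hbound.trans_lt (ENNReal.div_lt_top hQ.ne (tsub_pos_of_lt hM).ne')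
  refine ⟨hbound, hfinite, ?_⟩
  filter_upwards [ae_summable_toReal_of_lintegral_rpow_tsum_lt_top hX hp0 hfinite, hpos]
    with ω hsum hω
  refine hsum.congr fun n => ?_
  have hprod : 0 ≤ ∏ j ∈ Finset.range n, (R j ω).1 := Finset.prod_nonneg fun j _ => (hω j).le
  rw [ENNReal.toReal_ofReal (mul_nonneg hprod (abs_nonneg _)), abs_mul, abs_of_nonneg hprod]

/-- Moment bound and a.s. absolute convergence for the perpetuity series
`∑ M_1 ⋯ M_{n-1} Q_n` built from an i.i.d. sequence of pairs `(M_k, Q_k)` (indexed here by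
`ℕ`, so that the `n`-th term is `(∏_{j<n} M_j) Q_n`, the empty product being `1`). -/
theorem perpetuity_series_moment_bound_and_convergence
    {Ω : Type*} [MeasurableSpace Ω] (P : Measure Ω) [IsProbabilityMeasure P]
    (R : ℕ → Ω → ℝ × ℝ) (p : ℝ)
    (hmeas : ∀ k, Measurable (R k))
    (hindep : iIndepFun R P)
    (hident : ∀ k, Measure.map (R k) P = Measure.map (R 0) P)
    (hMpos : ∀ k, ∀ᵐ ω ∂P, 0 < (R k ω).1)
    (hp0 : 0 < p) (hp1 : p ≤ 1)
    (hM : ∫⁻ ω, ENNReal.ofReal ((R 0 ω).1 ^ p) ∂P < 1)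
    (hQ : ∫⁻ ω, ENNReal.ofReal (|(R 0 ω).2| ^ p) ∂P < ⊤) :
    (∫⁻ ω, (∑' n : ℕ, ENNReal.ofReal ((∏ j ∈ Finset.range n, (R j ω).1) * |(R n ω).2|)) ^ p ∂P
        ≤ (∫⁻ ω, ENNReal.ofReal (|(R 0 ω).2| ^ p) ∂P)
            / (1 - ∫⁻ ω, ENNReal.ofReal ((R 0 ω).1 ^ p) ∂P)) ∧
    (∫⁻ ω, (∑' n : ℕ, ENNReal.ofReal ((∏ j ∈ Finset.range n, (R j ω).1) * |(R n ω).2|)) ^ p ∂P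
        < ⊤) ∧
    (∀ᵐ ω ∂P, Summable fun n : ℕ => |(∏ j ∈ Finset.range n, (R j ω).1) * (R n ω).2|) :=
  perpetuity_series_moment_bound_and_convergence_general P R p hmeas hindep hident hMpos hp0 hp1 hM
    hQ
end

section
/- Let σ₀, σ₁ > 0, λ⁰¹, λ¹⁰ > 0 and 0 < β₀ < β₁. Define D₀(q) := λ⁰¹ + (1/2)σ₀²q(β₀ − q) and D₁(q) := λ¹⁰ + (1/2)σ₁²q(β₁ − q). Then there exists exactly one β ∈ (β₀, β₁) such that D₀(β) > 0 and D₀(β)·D₁(β) = λ⁰¹λ¹⁰. -/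
/-!
Write `D₀, D₁` for the two concave quadratics. At `β₀` the product `D₀ D₁` equals
`λ⁰¹ D₁(β₀) > λ⁰¹λ¹⁰`, at `β₁` it equals `D₀(β₁) λ¹⁰ < λ⁰¹λ¹⁰`, so the intermediate value theorem
gives a solution. Where both factors are positive, `log (D₀ D₁) = log D₀ + log D₁` is concave;
since it lies strictly above `log (λ⁰¹λ¹⁰)` at `β₀`, it can meet that level at most once to the
right of `β₀`.
-/

open Set

/-- `D₀ = mgfDenom λ⁰¹ σ₀ β₀` and `D₁ = mgfDenom λ¹⁰ σ₁ β₁`. -/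
noncomputable def mgfDenom (l σ b q : ℝ) : ℝ := l + 1 / 2 * σ ^ 2 * q * (b - q)

section mgfDenom

variable {l σ b q : ℝ}

@[simp]
lemma mgfDenom_self : mgfDenom l σ b b = l := by
  simp [mgfDenom]

lemma lt_mgfDenom (hσ : σ ≠ 0) (hq : 0 < q) (hqb : q < b) : l < mgfDenom l σ b q := by
  have : 0 < 1 / 2 * σ ^ 2 * q * (b - q) := by
    have := sub_pos.2 hqb
    positivity
  unfold mgfDenom
  linarith

lemma mgfDenom_lt (hσ : σ ≠ 0) (hb : 0 ≤ b) (hbq : b < q) : mgfDenom l σ b q < l := by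
  have : 0 < 1 / 2 * σ ^ 2 * q * (q - b) := by
    have := sub_pos.2 hbq
    have : 0 < q := hb.trans_lt hbq
    positivity
  unfold mgfDenom
  linarith

lemma continuous_mgfDenom : Continuous (mgfDenom l σ b) := by
  unfold mgfDenom
  fun_prop

lemma concaveOn_mgfDenom : ConcaveOn ℝ univ (mgfDenom l σ b) := by
  refine ⟨convex_univ, fun x _ y _ s t hs ht hst => ?_⟩
  obtain rfl : t = 1 - s := by linarith
  simp only [mgfDenom, smul_eq_mul]
  nlinarith [mul_nonneg (mul_nonneg (mul_nonneg hs ht) (sq_nonneg (x - y))) (sq_nonneg σ)]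

end mgfDenom

section log

variable {E : Type*} [AddCommGroup E] [Module ℝ E] {s : Set E} {f g : E → ℝ}

theorem ConcaveOn.log (hf : ConcaveOn ℝ s f) (hf₀ : ∀ x ∈ s, 0 < f x) :
    ConcaveOn ℝ s fun x => Real.log (f x) :=
  ⟨hf.1, fun x hx y hy a b ha hb hab => calc
    a • Real.log (f x) + b • Real.log (f y) ≤ Real.log (a • f x + b • f y) :=
      strictConcaveOn_log_Ioi.concaveOn.2 (hf₀ x hx) (hf₀ y hy) ha hb hab
    _ ≤ Real.log (f (a • x + b • y)) :=
      Real.log_le_log (convex_Ioi (0 : ℝ) (hf₀ x hx) (hf₀ y hy) ha hb hab) (hf.2 hx hy ha hb hab)⟩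

theorem ConcaveOn.log_mul (hf : ConcaveOn ℝ s f) (hg : ConcaveOn ℝ s g)
    (hf₀ : ∀ x ∈ s, 0 < f x) (hg₀ : ∀ x ∈ s, 0 < g x) :
    ConcaveOn ℝ s fun x => Real.log (f x * g x) :=
  ((hf.log hf₀).add (hg.log hg₀)).congr fun x hx =>
    (Real.log_mul (hf₀ x hx).ne' (hg₀ x hx).ne').symm

end log

section decayExponent

variable {σ0 σ1 l01 l10 β0 β1 : ℝ}

lemma lt_mgfDenom_mul_at_left (hσ1 : σ1 ≠ 0) (hl01 : 0 < l01) (hβ0 : 0 < β0) (hβ01 : β0 < β1) :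
    l01 * l10 < mgfDenom l01 σ0 β0 β0 * mgfDenom l10 σ1 β1 β0 := by
  rw [mgfDenom_self]
  exact mul_lt_mul_of_pos_left (lt_mgfDenom hσ1 hβ0 hβ01) hl01

lemma exists_mem_Ioo_mgfDenom_mul_eq (hσ0 : σ0 ≠ 0) (hσ1 : σ1 ≠ 0) (hl01 : 0 < l01)
    (hl10 : 0 < l10) (hβ0 : 0 < β0) (hβ01 : β0 < β1) :
    ∃ β ∈ Ioo β0 β1, mgfDenom l01 σ0 β0 β * mgfDenom l10 σ1 β1 β = l01 * l10 := by
  have h_at_β1 : mgfDenom l01 σ0 β0 β1 * mgfDenom l10 σ1 β1 β1 < l01 * l10 := by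
    rw [mgfDenom_self]
    exact mul_lt_mul_of_pos_right (mgfDenom_lt hσ0 hβ0.le hβ01) hl10
  exact intermediate_value_Ioo' hβ01.le
    (continuous_mgfDenom.mul continuous_mgfDenom).continuousOn
    ⟨h_at_β1, lt_mgfDenom_mul_at_left hσ1 hl01 hβ0 hβ01⟩

lemma lt_mgfDenom_mul_of_lt (hσ1 : σ1 ≠ 0) (hl01 : 0 < l01) (hl10 : 0 < l10) (hβ0 : 0 < β0)
    {x y : ℝ} (hx : β0 < x) (hxy : x < y) (hy : y < β1) (hD0y : 0 < mgfDenom l01 σ0 β0 y)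
    (hy_eq : mgfDenom l01 σ0 β0 y * mgfDenom l10 σ1 β1 y = l01 * l10) :
    l01 * l10 < mgfDenom l01 σ0 β0 x * mgfDenom l10 σ1 β1 x := by
  have hD0 : ∀ q ∈ Icc β0 y, 0 < mgfDenom l01 σ0 β0 q := fun q hq =>
    lt_min (by rwa [mgfDenom_self]) hD0y |>.trans_le <|
      concaveOn_mgfDenom.min_le_of_mem_Icc (mem_univ _) (mem_univ _) hq
  have hD1 : ∀ q ∈ Icc β0 y, 0 < mgfDenom l10 σ1 β1 q := fun q hq =>
    hl10.trans <| lt_mgfDenom hσ1 (hβ0.trans_le hq.1) (hq.2.trans_lt hy)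
  have hconc : ConcaveOn ℝ (Icc β0 y)
      fun q => Real.log (mgfDenom l01 σ0 β0 q * mgfDenom l10 σ1 β1 q) :=
    (concaveOn_mgfDenom.subset (subset_univ _) (convex_Icc _ _)).log_mul
      (concaveOn_mgfDenom.subset (subset_univ _) (convex_Icc _ _)) hD0 hD1
  by_contra! hx_le
  have hx_mem : x ∈ Icc β0 y := ⟨hx.le, hxy.le⟩
  have hPx : 0 < mgfDenom l01 σ0 β0 x * mgfDenom l10 σ1 β1 x :=
    mul_pos (hD0 x hx_mem) (hD1 x hx_mem)
  have hβ0y := hx.trans hxy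
  have h_log_lt := hconc.lt_right_of_left_lt (left_mem_Icc.2 hβ0y.le) (right_mem_Icc.2 hβ0y.le)
    (by rw [openSegment_eq_Ioo hβ0y]; exact ⟨hx, hxy⟩)
    (Real.log_lt_log hPx <|
      hx_le.trans_lt (lt_mgfDenom_mul_at_left hσ1 hl01 hβ0 (hβ0y.trans hy)))
  rw [hy_eq] at h_log_lt
  exact h_log_lt.not_ge (Real.log_le_log hPx hx_le)

end decayExponent

/-- Existence and uniqueness of the decay exponent `β ∈ (β₀, β₁)`: the unique point where
`D₀(β) > 0` and `D₀(β)·D₁(β) = λ⁰¹λ¹⁰`, i.e. where the moment generating function equals `1`. -/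
theorem decay_exponent_exists_unique
    (σ0 σ1 l01 l10 β0 β1 : ℝ)
    (hσ0 : 0 < σ0) (hσ1 : 0 < σ1) (hl01 : 0 < l01) (hl10 : 0 < l10)
    (hβ0 : 0 < β0) (hβ01 : β0 < β1) :
    ∃! β : ℝ, β ∈ Set.Ioo β0 β1 ∧
      0 < l01 + 1 / 2 * σ0 ^ 2 * β * (β0 - β) ∧
      (l01 + 1 / 2 * σ0 ^ 2 * β * (β0 - β)) * (l10 + 1 / 2 * σ1 ^ 2 * β * (β1 - β))
        = l01 * l10 := by
  obtain ⟨β, hβ, hβ_eq⟩ := exists_mem_Ioo_mgfDenom_mul_eq hσ0.ne' hσ1.ne' hl01 hl10 hβ0 hβ01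
  have hD1 : 0 < mgfDenom l10 σ1 β1 β :=
    hl10.trans (lt_mgfDenom hσ1.ne' (hβ0.trans hβ.1) hβ.2)
  have hD0 : 0 < mgfDenom l01 σ0 β0 β :=
    pos_of_mul_pos_left (hβ_eq ▸ mul_pos hl01 hl10) hD1.le
  refine ⟨β, ⟨hβ, hD0, hβ_eq⟩, fun y ⟨hy, hD0y, hy_eq⟩ => ?_⟩
  rcases lt_trichotomy y β with hyβ | rfl | hβy
  · exact absurd hy_eq (lt_mgfDenom_mul_of_lt hσ1.ne' hl01 hl10 hβ0 hy.1 hyβ hβ.2 hD0 hβ_eq).ne'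
  · rfl
  · exact absurd hβ_eq (lt_mgfDenom_mul_of_lt hσ1.ne' hl01 hl10 hβ0 hβ.1 hβy hy.2 hD0y hy_eq).ne'
end
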